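/- Let R₁ and R₂ be Rota-Baxter operators of weight zero on a BiHom-pre-Lie superalgebra (A,∘,α,β) with α,β bijective, and suppose R₁∘R₂ = R₂∘R₁. Then R₂ is a Rota-Baxter operator of weight zero on the BiHom-L-dendriform superalgebra (A,▷,◁,α,β) defined by x▷y = R₁(x)∘y and x◁y = −(−1)^{|x||y|}(α⁻¹β(y))∘R₁(αβ⁻¹(x)); that is, R₂(x)▷R₂(y) = R₂(R₂(x)▷y + x▷R₂(y)) and R₂(x)◁R₂(y) = R₂(R₂(x)◁y + x◁R₂(y)) for all homogeneous x,y. -/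

import Mathlib

/-!
Both identities reduce to the Rota–Baxter identity for `R₂` on the underlying product: `R₂`
commutes with `R₁` and with the twists `α⁻¹β`, `αβ⁻¹`, so it can be pulled through them, and the
sign in `◁` is the same on both sides. The Rota–Baxter identity is bilinear, so it holds on all
of `A` as soon as it holds on homogeneous elements.
-/

section RotaBaxter

variable {K A : Type*} [CommRing K] [AddCommGroup A] [Module K A]

def IsRotaBaxter (c : A →ₗ[K] A →ₗ[K] A) (R : A →ₗ[K] A) : Prop :=
  ∀ x y, c (R x) (R y) = R (c (R x) y + c x (R y))

lemma LinearMap.ext₂_of_iSup_eq_top {ι : Type*} {M : Type*} [AddCommGroup M] [Module K M]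
    {𝒜 : ι → Submodule K A} (h𝒜 : ⨆ i, 𝒜 i = ⊤)
    {f g : A →ₗ[K] A →ₗ[K] M}
    (h : ∀ i j, ∀ x ∈ 𝒜 i, ∀ y ∈ 𝒜 j, f x y = g x y) : f = g := by
  have hspan : Submodule.span K (⋃ i, (𝒜 i : Set A)) = ⊤ := by
    rw [← Submodule.iSup_eq_span, h𝒜]
  refine LinearMap.ext_on hspan fun x hx => LinearMap.ext_on hspan fun y hy => ?_
  obtain ⟨i, hx⟩ := Set.mem_iUnion.mp hx
  obtain ⟨j, hy⟩ := Set.mem_iUnion.mp hy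
  exact h i j x hx y hy

lemma IsRotaBaxter.of_homogeneous {ι : Type*} {𝒜 : ι → Submodule K A} (h𝒜 : ⨆ i, 𝒜 i = ⊤) {c : A →ₗ[K] A →ₗ[K] A} {R : A →ₗ[K] A}
    (h : ∀ i j, ∀ x ∈ 𝒜 i, ∀ y ∈ 𝒜 j, c (R x) (R y) = R (c (R x) y + c x (R y))) :
    IsRotaBaxter c R := by
  have := LinearMap.ext₂_of_iSup_eq_top (f := c.compl₁₂ R R)
    (g := (c.comp R + c.compl₂ R).compr₂ R) h𝒜 (by simpa using h)
  intro x y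
  simpa using LinearMap.congr_fun₂ this x y

lemma LinearMap.commute_symm_of_commute {R : A →ₗ[K] A} {e : A ≃ₗ[K] A}
    (h : ∀ a, R (e a) = e (R a)) (a : A) : R (e.symm a) = e.symm (R a) := by
  rw [LinearEquiv.eq_symm_apply, ← h, e.apply_symm_apply]

end RotaBaxter

theorem statement17_general
    (K : Type) [Field K]
    (A : Type) [AddCommGroup A] [Module K A]
    (𝒜 : ZMod 2 → Submodule K A)
    (hA : DirectSum.IsInternal 𝒜)
    (c : A →ₗ[K] A →ₗ[K] A)
    (α β : A ≃ₗ[K] A)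
    -- R₁ and R₂ are commuting Rota-Baxter operators of weight zero
    (R₁ R₂ : A →ₗ[K] A)
    (hR₂α : ∀ a, R₂ (α a) = α (R₂ a))
    (hR₂β : ∀ a, R₂ (β a) = β (R₂ a))
    (hR₂B : ∀ i j : ZMod 2, ∀ x ∈ 𝒜 i, ∀ y ∈ 𝒜 j,
      c (R₂ x) (R₂ y) = R₂ (c (R₂ x) y + c x (R₂ y)))
    (hRR : ∀ a, R₁ (R₂ a) = R₂ (R₁ a))
    -- the BiHom-L-dendriform products defined from R₁
    (dr : A → A → A) (hdr : ∀ x y, dr x y = c (R₁ x) y)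
    (dl : ZMod 2 → ZMod 2 → A → A → A)
    (hdl : ∀ i j x y, dl i j x y
      = -(((-1 : K) ^ (i.val * j.val)) • c (α.symm (β y)) (R₁ (α (β.symm x))))) :
    -- R₂ is a Rota-Baxter operator of weight zero on `(A,▷,◁,α,β)`:
    (∀ i j : ZMod 2, ∀ x ∈ 𝒜 i, ∀ y ∈ 𝒜 j,
      dr (R₂ x) (R₂ y) = R₂ (dr (R₂ x) y + dr x (R₂ y)))
    ∧ (∀ i j : ZMod 2, ∀ x ∈ 𝒜 i, ∀ y ∈ 𝒜 j,
      dl i j (R₂ x) (R₂ y) = R₂ (dl i j (R₂ x) y + dl i j x (R₂ y))) := by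
  have hRB : IsRotaBaxter c R₂ := .of_homogeneous hA.submodule_iSup_eq_top hR₂B
  have hR₂αs := LinearMap.commute_symm_of_commute hR₂α
  have hR₂βs := LinearMap.commute_symm_of_commute hR₂β
  refine ⟨fun i j x _ y _ => ?_, fun i j x _ y _ => ?_⟩
  · simp only [hdr, hRR]
    exact hRB _ _
  · simp only [hdl]
    rw [← hR₂β y, ← hR₂αs, ← hR₂βs x, ← hR₂α, hRR, hRB]
    simp only [map_add, map_neg, map_smul, smul_add]
    abel

theorem statement17
    (K : Type) [Field K] [CharZero K]
    (A : Type) [AddCommGroup A] [Module K A]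
    (𝒜 : ZMod 2 → Submodule K A)
    (hA : DirectSum.IsInternal 𝒜)
    (c : A →ₗ[K] A →ₗ[K] A)
    (α β : A ≃ₗ[K] A)
    (hcomm : ∀ a, α (β a) = β (α a))
    (hαe : ∀ i : ZMod 2, ∀ a ∈ 𝒜 i, α a ∈ 𝒜 i)
    (hβe : ∀ i : ZMod 2, ∀ a ∈ 𝒜 i, β a ∈ 𝒜 i)
    (hce : ∀ i j : ZMod 2, ∀ x ∈ 𝒜 i, ∀ y ∈ 𝒜 j, c x y ∈ 𝒜 (i + j))
    (hαm : ∀ a b : A, α (c a b) = c (α a) (α b))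
    (hβm : ∀ a b : A, β (c a b) = c (β a) (β b))
    (hpre : ∀ i j k : ZMod 2, ∀ x ∈ 𝒜 i, ∀ y ∈ 𝒜 j, ∀ z ∈ 𝒜 k,
      c (c (β x) (α y)) (β z) - c (α (β x)) (c (α y) z)
        = ((-1 : K) ^ (i.val * j.val)) •
            (c (c (β y) (α x)) (β z) - c (α (β y)) (c (α x) z)))
    -- R₁ and R₂ are commuting Rota-Baxter operators of weight zero
    (R₁ R₂ : A →ₗ[K] A)
    (hR₁e : ∀ i : ZMod 2, ∀ a ∈ 𝒜 i, R₁ a ∈ 𝒜 i)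
    (hR₂e : ∀ i : ZMod 2, ∀ a ∈ 𝒜 i, R₂ a ∈ 𝒜 i)
    (hR₁α : ∀ a, R₁ (α a) = α (R₁ a))
    (hR₁β : ∀ a, R₁ (β a) = β (R₁ a))
    (hR₂α : ∀ a, R₂ (α a) = α (R₂ a))
    (hR₂β : ∀ a, R₂ (β a) = β (R₂ a))
    (hR₁B : ∀ i j : ZMod 2, ∀ x ∈ 𝒜 i, ∀ y ∈ 𝒜 j,
      c (R₁ x) (R₁ y) = R₁ (c (R₁ x) y + c x (R₁ y)))
    (hR₂B : ∀ i j : ZMod 2, ∀ x ∈ 𝒜 i, ∀ y ∈ 𝒜 j,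
      c (R₂ x) (R₂ y) = R₂ (c (R₂ x) y + c x (R₂ y)))
    (hRR : ∀ a, R₁ (R₂ a) = R₂ (R₁ a))
    -- the BiHom-L-dendriform products defined from R₁
    (dr : A → A → A) (hdr : ∀ x y, dr x y = c (R₁ x) y)
    (dl : ZMod 2 → ZMod 2 → A → A → A)
    (hdl : ∀ i j x y, dl i j x y
      = -(((-1 : K) ^ (i.val * j.val)) • c (α.symm (β y)) (R₁ (α (β.symm x))))) :
    -- R₂ is a Rota-Baxter operator of weight zero on `(A,▷,◁,α,β)`:
    (∀ i j : ZMod 2, ∀ x ∈ 𝒜 i, ∀ y ∈ 𝒜 j,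
      dr (R₂ x) (R₂ y) = R₂ (dr (R₂ x) y + dr x (R₂ y)))
    ∧ (∀ i j : ZMod 2, ∀ x ∈ 𝒜 i, ∀ y ∈ 𝒜 j,
      dl i j (R₂ x) (R₂ y) = R₂ (dl i j (R₂ x) y + dl i j x (R₂ y))) :=
  statement17_general K A 𝒜 hA c α β R₁ R₂ hR₂α hR₂β hR₂B hRR dr hdr dl hdl
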